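/- Let S be a finite set and let μ₁, μ₂ be probability measures on {0,1}^S assigning positive probability to every configuration, with μ₂ monotone. Set A := inf over s ∈ S and ξ ∈ {0,1}^{S∖{s}} of [μ₂(σ(s)=1 | σ ≡ ξ on S∖{s}) − μ₁(σ(s)=1 | σ ≡ ξ on S∖{s})], and assume A > 0. Then for every ε ∈ (0,1) satisfying A > 1/(1−ε) − 1, one has μ₁ ≼ μ₂^{(-,ε)}. -/

import Mathlib

/-!
Configurations on a finite set `S` are functions `S → Bool` (`true` = 1, `false` = 0),
probability measures are represented by their weight functions.

Write `ν = μ₂^{(-,ε)}`. By Holley's inequality it suffices that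
`μ₁ a * ν b ≤ μ₁ (a ⊓ b) * ν (a ⊔ b)`, and for fully supported weights this follows, by raising `a ⊓ b` to `a` and `b` to `a ⊔ b` one
site at a time, from the single-site comparison `μ₁(1 | ξ) ≤ ν(1 | ξ')` for `ξ ≤ ξ'`. That is the
chain `μ₁(1 | ξ) ≤ (1 - ε) μ₂(1 | ξ) ≤ (1 - ε) μ₂(1 | ξ') ≤ ν(1 | ξ')`: the first step is the
hypothesis on `A` (it says `ε / (1 - ε) < A`), the second is monotonicity of `μ₂`, and the last
holds because, given that the thinned configuration equals `ξ'` off `s`, the original one lies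
above `ξ'` off `s`, where monotonicity of `μ₂` applies again.
-/

open Finset

variable {S : Type*} [Fintype S] [DecidableEq S]

/-- `μ` is a probability weight assigning positive probability to every configuration. -/
def IsProbWeight (μ : (S → Bool) → ℝ) : Prop :=
  (∀ σ, 0 < μ σ) ∧ ∑ σ : S → Bool, μ σ = 1

/-- The conditional probability `μ(σ(s) = 1 | σ ≡ ξ off s)`. -/
noncomputable def condOne (μ : (S → Bool) → ℝ) (s : S) (ξ : S → Bool) : ℝ :=
  μ (Function.update ξ s true) /
    (μ (Function.update ξ s true) + μ (Function.update ξ s false))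

/-- The conditional probability `μ(σ(s) = 0 | σ ≡ ξ off s)`. -/
noncomputable def condZero (μ : (S → Bool) → ℝ) (s : S) (ξ : S → Bool) : ℝ :=
  μ (Function.update ξ s false) /
    (μ (Function.update ξ s true) + μ (Function.update ξ s false))

/-- `μ` is monotone: the conditional probability of a 1 at `s` is nondecreasing in the
configuration off `s`. -/
def IsMonotoneWeight (μ : (S → Bool) → ℝ) : Prop :=
  ∀ s : S, ∀ ξ ξ' : S → Bool, (∀ t, t ≠ s → ξ t ≤ ξ' t) →
    condOne μ s ξ ≤ condOne μ s ξ'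

/-- The weight function of `μ^{(-,ε)}`: the law of `s ↦ min (X s) (Z s)` where `X ∼ μ`
and, independently, the `Z s` are i.i.d. with `P(Z s = 1) = 1 - ε`. -/
noncomputable def minusEps (μ : (S → Bool) → ℝ) (ε : ℝ) : (S → Bool) → ℝ := fun η =>
  ∑ σ : S → Bool, μ σ *
    ∏ s : S, (if η s then (if σ s then 1 - ε else 0) else (if σ s then ε else 1))

/-- The weight function of `μ^{(+,ε)}`: the law of `s ↦ max (X s) (Z s)` where `X ∼ μ`
and, independently, the `Z s` are i.i.d. with `P(Z s = 1) = ε`. -/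
noncomputable def plusEps (μ : (S → Bool) → ℝ) (ε : ℝ) : (S → Bool) → ℝ := fun η =>
  ∑ σ : S → Bool, μ σ *
    ∏ s : S, (if η s then (if σ s then 1 else ε) else (if σ s then 0 else 1 - ε))

/-- Stochastic domination `μ ≼ ν` for weight functions on `{0,1}^S`, `S` finite:
`∑ f dμ ≤ ∑ f dν` for every nondecreasing `f` (coordinatewise order, `false < true`). -/
def Dominates (μ ν : (S → Bool) → ℝ) : Prop :=
  ∀ f : (S → Bool) → ℝ, Monotone f →
    ∑ σ : S → Bool, μ σ * f σ ≤ ∑ σ : S → Bool, ν σ * f σ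

open Function

section SingleSite

variable {μ ν : (S → Bool) → ℝ}

omit [Fintype S] in
lemma condOne_le_one (hμ : ∀ σ, 0 < μ σ) (s : S) (ξ : S → Bool) : condOne μ s ξ ≤ 1 :=
  div_le_one_of_le₀ (le_add_of_nonneg_right (hμ _).le) (add_pos (hμ _) (hμ _)).le

omit [Fintype S] in
lemma condOne_le_condOne_iff (hμ : ∀ σ, 0 < μ σ) (hν : ∀ σ, 0 < ν σ) (s : S) (ξ ξ' : S → Bool) :
    condOne μ s ξ ≤ condOne ν s ξ' ↔
      μ (update ξ s true) * ν (update ξ' s false) ≤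
        ν (update ξ' s true) * μ (update ξ s false) := by
  have := hμ (update ξ s true); have := hμ (update ξ s false)
  have := hν (update ξ' s true); have := hν (update ξ' s false)
  rw [condOne, condOne, div_le_div_iff₀ (by positivity) (by positivity)]
  constructor <;> intro h <;> linarith

variable (hμ : ∀ σ, 0 < μ σ) (hν : ∀ σ, 0 < ν σ)
  (h : ∀ s ξ ξ', ξ ≤ ξ' → condOne μ s ξ ≤ condOne ν s ξ')
include hμ hν h

omit [Fintype S] in
lemma mul_le_mul_piecewise_true (D : Finset S) {x y : S → Bool} (hxy : x ≤ y)
    (hy : ∀ s ∈ D, y s = false) :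
    μ (D.piecewise (fun _ => true) x) * ν y ≤ μ x * ν (D.piecewise (fun _ => true) y) := by
  induction D using Finset.induction_on with
  | empty => simp only [piecewise_empty, le_refl]
  | insert s D hs ih =>
    set x' := D.piecewise (fun _ => true) x
    set y' := D.piecewise (fun _ => true) y
    have hy's : y' s = false := by
      simp only [y', piecewise_eq_of_notMem _ _ _ hs, hy s (mem_insert_self s D)]
    have hx's : x' s = false := by
      have hxs := hxy s
      rw [hy s (mem_insert_self s D)] at hxs
      simpa only [x', piecewise_eq_of_notMem _ _ _ hs] using Bool.eq_false_of_le_false hxs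
    have hstep : μ (update x' s true) * ν (update y' s false) ≤
        ν (update y' s true) * μ (update x' s false) :=
      (condOne_le_condOne_iff hμ hν s x' y').1 (h s x' y' (piecewise_le_piecewise D le_rfl hxy))
    have hx'_eq : update x' s false = x' := update_eq_self_iff.2 hx's.symm
    have hy'_eq : update y' s false = y' := update_eq_self_iff.2 hy's.symm
    rw [hx'_eq, hy'_eq] at hstep
    have hind := ih (fun t ht => hy t (mem_insert_of_mem ht))
    rw [piecewise_insert, piecewise_insert]
    have hpos : 0 < μ x' * ν y' := mul_pos (hμ _) (hν _)
    refine le_of_mul_le_mul_right ?_ hpos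
    nlinarith [mul_le_mul hstep hind (mul_pos (hμ _) (hν _)).le (mul_pos (hν _) (hμ _)).le]

lemma holley_condition_of_condOne_le (a b : S → Bool) :
    μ a * ν b ≤ μ (a ⊓ b) * ν (a ⊔ b) := by
  set D := univ.filter fun s => a s = true ∧ b s = false
  have hx : D.piecewise (fun _ => true) (a ⊓ b) = a := by
    ext s; by_cases hs : s ∈ D <;> cases ha : a s <;> cases hb : b s <;> simp_all [D]
  have hy : D.piecewise (fun _ => true) b = a ⊔ b := by
    ext s; by_cases hs : s ∈ D <;> cases ha : a s <;> cases hb : b s <;> simp_all [D]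
  simpa only [hx, hy] using
    mul_le_mul_piecewise_true hμ hν h D (x := a ⊓ b) (y := b) inf_le_right (by simp +contextual [D])

end SingleSite

theorem dominates_of_condOne_le {μ ν : (S → Bool) → ℝ} (hμ : ∀ σ, 0 < μ σ) (hν : ∀ σ, 0 < ν σ)
    (hsum : ∑ σ, μ σ = ∑ σ, ν σ) (h : ∀ s ξ ξ', ξ ≤ ξ' → condOne μ s ξ ≤ condOne ν s ξ') :
    Dominates μ ν := by
  intro f hf
  have := holley μ ν (fun σ => f σ - f ⊥) (fun σ => sub_nonneg.2 (hf bot_le))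
    (fun σ => (hμ σ).le) (fun σ => (hν σ).le) (fun σ τ hστ => sub_le_sub_right (hf hστ) _) hsum
    (holley_condition_of_condOne_le hμ hν h)
  simp only [sub_mul, sum_sub_distrib, ← mul_sum, hsum, sub_le_sub_iff_right] at this
  simpa only [mul_comm] using this

section MinusEps

/-- The probability that `min x Z = y` when `P(Z = 1) = 1 - ε`. -/
def minusEpsKernel (ε : ℝ) (y x : Bool) : ℝ :=
  if y then (if x then 1 - ε else 0) else (if x then ε else 1)

variable {μ : (S → Bool) → ℝ} {ε : ℝ}

lemma minusEps_eq (η : S → Bool) :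
    minusEps μ ε η = ∑ σ, μ σ * ∏ s, minusEpsKernel ε (η s) (σ s) := rfl

lemma minusEpsKernel_nonneg (hε₀ : 0 ≤ ε) (hε₁ : ε ≤ 1) (y x : Bool) :
    0 ≤ minusEpsKernel ε y x := by
  cases y <;> cases x <;> simp [minusEpsKernel] <;> linarith

lemma minusEpsKernel_self_pos (hε₁ : ε < 1) (x : Bool) : 0 < minusEpsKernel ε x x := by
  cases x <;> simp [minusEpsKernel]
  linarith

lemma sum_minusEpsKernel (x : Bool) : ∑ y, minusEpsKernel ε y x = 1 := by
  cases x <;> simp [minusEpsKernel]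

lemma minusEps_pos (hμ : ∀ σ, 0 < μ σ) (hε₀ : 0 ≤ ε) (hε₁ : ε < 1) (η : S → Bool) :
    0 < minusEps μ ε η := by
  rw [minusEps_eq]
  refine sum_pos' (fun σ _ => mul_nonneg (hμ σ).le ?_) ⟨η, mem_univ η, ?_⟩
  · exact prod_nonneg fun s _ => minusEpsKernel_nonneg hε₀ hε₁.le _ _
  · exact mul_pos (hμ η) (prod_pos fun s _ => minusEpsKernel_self_pos hε₁ _)

lemma sum_minusEps : ∑ η, minusEps μ ε η = ∑ σ, μ σ := by
  simp only [minusEps_eq]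
  rw [sum_comm]
  refine sum_congr rfl fun σ _ => ?_
  rw [← mul_sum, ← Fintype.prod_sum (fun s y => minusEpsKernel ε y (σ s))]
  simp only [sum_minusEpsKernel, prod_const_one, mul_one]

def minusEpsKernelOff (ε : ℝ) (s : S) (ξ σ : S → Bool) : ℝ :=
  ∏ t ∈ univ \ {s}, minusEpsKernel ε (ξ t) (σ t)

lemma prod_minusEpsKernel_update (ξ σ : S → Bool) (s : S) (y x : Bool) :
    ∏ t, minusEpsKernel ε (update ξ s y t) (update σ s x t) =
      minusEpsKernel ε y x * minusEpsKernelOff ε s ξ σ := by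
  simp only [apply_update₂ (fun _ => minusEpsKernel ε)]
  exact prod_update_of_mem (mem_univ s) _ _

lemma sum_sum_update (s : S) (F : (S → Bool) → ℝ) :
    ∑ σ, ∑ b, F (update σ s b) = 2 * ∑ σ, F σ := by
  have hflip : Involutive fun σ : S → Bool => update σ s (!σ s) := by
    intro σ
    simp
  calc ∑ σ, ∑ b, F (update σ s b) = ∑ σ, (F σ + F (update σ s (!σ s))) := by
        refine sum_congr rfl fun σ _ => ?_
        have hσ := update_eq_self s σ
        cases h : σ s <;> rw [h] at hσ <;> simp [hσ, add_comm]
    _ = 2 * ∑ σ, F σ := by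
        rw [sum_add_distrib, hflip.bijective.sum_comp F]
        ring

lemma two_mul_minusEps_update (ξ : S → Bool) (s : S) (y : Bool) :
    2 * minusEps μ ε (update ξ s y) =
      ∑ σ, (∑ x, μ (update σ s x) * minusEpsKernel ε y x) * minusEpsKernelOff ε s ξ σ := by
  rw [minusEps_eq, ← sum_sum_update s]
  refine sum_congr rfl fun σ _ => ?_
  simp only [prod_minusEpsKernel_update, sum_mul, mul_assoc]

lemma le_of_minusEpsKernelOff_ne_zero {s : S} {ξ σ : S → Bool}
    (h : minusEpsKernelOff ε s ξ σ ≠ 0) (t : S) (ht : t ≠ s) : ξ t ≤ σ t := by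
  by_contra hlt
  refine h (prod_eq_zero (i := t) (by simp [ht]) ?_)
  revert hlt
  cases ξ t <;> cases σ t <;> simp [minusEpsKernel]

lemma mul_condOne_le_condOne_minusEps (hμ : ∀ σ, 0 < μ σ) (hmono : IsMonotoneWeight μ)
    (hε₀ : 0 ≤ ε) (hε₁ : ε < 1) (s : S) (ξ : S → Bool) :
    (1 - ε) * condOne μ s ξ ≤ condOne (minusEps μ ε) s ξ := by
  set W := minusEpsKernelOff ε s ξ
  set c := condOne μ s ξ
  have hterm : ∀ σ, c * ((μ (update σ s true) + μ (update σ s false)) * W σ) ≤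
      μ (update σ s true) * W σ := by
    intro σ
    have hW : 0 ≤ W σ := prod_nonneg fun t _ => minusEpsKernel_nonneg hε₀ hε₁.le _ _
    rcases hW.eq_or_lt with hW | hW
    · simp [← hW]
    rw [← mul_assoc]
    gcongr
    have : c ≤ condOne μ s σ := hmono s ξ σ (le_of_minusEpsKernelOff_ne_zero hW.ne')
    rwa [condOne, le_div_iff₀ (add_pos (hμ _) (hμ _))] at this
  have hsum := sum_le_sum fun σ (_ : σ ∈ univ) => hterm σ
  rw [← mul_sum] at hsum
  have hY : 2 * minusEps μ ε (update ξ s true) = (1 - ε) * ∑ σ, μ (update σ s true) * W σ := by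
    rw [two_mul_minusEps_update, mul_sum]
    refine sum_congr rfl fun σ _ => ?_
    simp only [Fintype.sum_bool, minusEpsKernel, Bool.false_eq_true, ↓reduceIte]
    ring
  have hZ : 2 * (minusEps μ ε (update ξ s true) + minusEps μ ε (update ξ s false)) =
      ∑ σ, (μ (update σ s true) + μ (update σ s false)) * W σ := by
    rw [mul_add, two_mul_minusEps_update, two_mul_minusEps_update, ← sum_add_distrib]
    refine sum_congr rfl fun σ _ => ?_
    simp only [Fintype.sum_bool, minusEpsKernel, Bool.false_eq_true, ↓reduceIte]
    ring
  have := mul_le_mul_of_nonneg_left hsum (sub_nonneg.2 hε₁.le)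
  rw [← hY, ← hZ] at this
  rw [condOne, le_div_iff₀ (add_pos (minusEps_pos hμ hε₀ hε₁ _) (minusEps_pos hμ hε₀ hε₁ _))]
  linarith

end MinusEps

theorem lemma33_general (μ₁ μ₂ : (S → Bool) → ℝ) (h₁ : IsProbWeight μ₁) (h₂ : IsProbWeight μ₂)
    (hmono : IsMonotoneWeight μ₂) (A : ℝ)
    (hA : A = sInf {x : ℝ | ∃ (s : S) (ξ : S → Bool), x = condOne μ₂ s ξ - condOne μ₁ s ξ})
    (ε : ℝ) (hε : ε ∈ Set.Ioo (0 : ℝ) 1)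
    (hεA : 1 / (1 - ε) - 1 < A) :
    Dominates μ₁ (minusEps μ₂ ε) := by
  obtain ⟨hε₀, hε₁⟩ := hε
  have hA_le (s : S) (ξ : S → Bool) : A ≤ condOne μ₂ s ξ - condOne μ₁ s ξ := by
    have hfin : {x : ℝ | ∃ (s : S) (ξ : S → Bool), x = condOne μ₂ s ξ - condOne μ₁ s ξ}.Finite :=
      (Set.finite_range fun p : S × (S → Bool) => condOne μ₂ p.1 p.2 - condOne μ₁ p.1 p.2).subset
        (by rintro _ ⟨s, ξ, rfl⟩; exact ⟨(s, ξ), rfl⟩)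
    exact hA ▸ csInf_le hfin.bddBelow ⟨s, ξ, rfl⟩
  have hεA' : ε < A * (1 - ε) := by
    rw [div_sub_one (sub_pos.2 hε₁).ne', div_lt_iff₀ (sub_pos.2 hε₁)] at hεA
    linarith
  have hA_pos : 0 < A := pos_of_mul_pos_left (hε₀.trans hεA') (sub_pos.2 hε₁).le
  refine dominates_of_condOne_le h₁.1 (minusEps_pos h₂.1 hε₀.le hε₁)
    (by rw [sum_minusEps, h₁.2, h₂.2]) fun s ξ ξ' hξ => ?_
  calc condOne μ₁ s ξ ≤ (1 - ε) * condOne μ₂ s ξ := by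
        linarith [hA_le s ξ, mul_nonneg hε₀.le (sub_nonneg.2 (condOne_le_one h₂.1 s ξ)),
          mul_pos hε₀ hA_pos]
    _ ≤ (1 - ε) * condOne μ₂ s ξ' :=
        mul_le_mul_of_nonneg_left (hmono s ξ ξ' fun t _ => hξ t) (sub_nonneg.2 hε₁.le)
    _ ≤ condOne (minusEps μ₂ ε) s ξ' := mul_condOne_le_condOne_minusEps h₂.1 hmono hε₀.le hε₁ s ξ'

theorem lemma33 (μ₁ μ₂ : (S → Bool) → ℝ) (h₁ : IsProbWeight μ₁) (h₂ : IsProbWeight μ₂)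
    (hmono : IsMonotoneWeight μ₂) (A : ℝ)
    (hA : A = sInf {x : ℝ | ∃ (s : S) (ξ : S → Bool), x = condOne μ₂ s ξ - condOne μ₁ s ξ})
    (hApos : 0 < A) (ε : ℝ) (hε : ε ∈ Set.Ioo (0 : ℝ) 1)
    (hεA : 1 / (1 - ε) - 1 < A) :
    Dominates μ₁ (minusEps μ₂ ε) :=
  lemma33_general μ₁ μ₂ h₁ h₂ hmono A hA ε hε hεA
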